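/- arXiv:2307.12544 — 5 statements merged into one kernel-verified Lean document; each statement's English description precedes it below -/
import Mathlib

section
/- Let (Ω, ℱ, P) be a probability space, 𝒢 ⊆ ℱ a sub-σ-algebra, and Y ∈ L²(P). Let Θ₀ be a closed linear subspace of L²(P) every element of which is almost-everywhere equal to a 𝒢-measurable function, let Θₙ ⊆ Θ₀ be a closed linear subspace, and let Πₙ denote the orthogonal projection onto Θₙ. Assume the conditional expectation μ₀ := E[Y | 𝒢] belongs to Θ₀. Let ℓ : Θ₀ → ℝ be a continuous linear functional with Riesz representer α₀ ∈ Θ₀, i.e. ℓ(θ) = E[α₀·θ] for all θ ∈ Θ₀. Then for every μₙ ∈ Θₙ: ℓ(μₙ) + E[(Πₙ α₀)·(Y − μₙ)] = ℓ(Πₙ μ₀). -/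
open MeasureTheory

local notation "⟪" x ", " y "⟫" => @inner ℝ _ _ x y

private lemma integral_mul_eq_inner {Ω : Type*} [MeasurableSpace Ω] {P : Measure Ω}
    (f g : Lp ℝ 2 P) : ∫ ω, f ω * g ω ∂P = ⟪f, g⟫ := by
  rw [MeasureTheory.L2.inner_def]
  refine integral_congr_ae (Filter.Eventually.of_forall fun ω => ?_)
  simp [RCLike.inner_apply, mul_comm]

private lemma integrable_mul_L2 {Ω : Type*} [MeasurableSpace Ω] {P : Measure Ω}
    (f g : Lp ℝ 2 P) : Integrable (fun ω => f ω * g ω) P := by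
  have := MeasureTheory.L2.integrable_inner (𝕜 := ℝ) f g
  refine this.congr (Filter.Eventually.of_forall fun ω => ?_)
  simp [RCLike.inner_apply, mul_comm]

/-- Population-level debiasing identity: with `𝒢` a sub-σ-algebra, `Y ∈ L²(P)`,
`Θ0` a closed subspace of `𝒢`-measurable functions containing `μ0 = E[Y|𝒢]`,
`Θn ⊆ Θ0` closed with orthogonal projection `Πₙ`, and `ℓ` a continuous linear
functional on `Θ0` with Riesz representer `α0`, one has for every `μn ∈ Θn`:
`ℓ(μn) + E[(Πₙα0)·(Y − μn)] = ℓ(Πₙμ0)`. -/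
theorem stmt_1
    {Ω : Type*} [mΩ : MeasurableSpace Ω] (P : Measure Ω) [IsProbabilityMeasure P]
    (m𝒢 : MeasurableSpace Ω) (hle : m𝒢 ≤ mΩ)
    (Y : Lp ℝ 2 P)
    (Θ0 Θn : Submodule ℝ (Lp ℝ 2 P)) [CompleteSpace Θ0] [CompleteSpace Θn]
    (hmeas : ∀ f ∈ Θ0, AEStronglyMeasurable[m𝒢] (f : Ω → ℝ) P)
    (hsub : Θn ≤ Θ0)
    (μ0 : Lp ℝ 2 P) (hμ0mem : μ0 ∈ Θ0)
    (hμ0 : (μ0 : Ω → ℝ) =ᵐ[P] P[(Y : Ω → ℝ)|m𝒢])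
    (ℓ : Θ0 →L[ℝ] ℝ) (α0 : Lp ℝ 2 P) (hα0 : α0 ∈ Θ0)
    (hRiesz : ∀ θ : Θ0, ℓ θ = ∫ ω, α0 ω * (θ : Lp ℝ 2 P) ω ∂P)
    (μn : Lp ℝ 2 P) (hμn : μn ∈ Θn) :
    ℓ ⟨μn, hsub hμn⟩
      + ∫ ω, (Θn.orthogonalProjectionOnto α0 : Lp ℝ 2 P) ω * (Y ω - μn ω) ∂P
      = ℓ ⟨(Θn.orthogonalProjectionOnto μ0 : Lp ℝ 2 P),
            hsub (Θn.orthogonalProjectionOnto μ0).2⟩ := by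
  set g : Lp ℝ 2 P := (Θn.orthogonalProjectionOnto α0 : Lp ℝ 2 P) with hg
  -- μ0 equals condExpL2 of Y as an element of Lp
  have hμ0eq : μ0 = (condExpL2 ℝ ℝ hle Y : Lp ℝ 2 P) := by
    apply Lp.ext
    have h2 : ((condExpL2 ℝ ℝ hle Y : Lp ℝ 2 P) : Ω → ℝ) =ᵐ[P] P[(Y : Ω → ℝ)|m𝒢] :=
      ae_eq_condExp_of_forall_setIntegral_eq hle
        ((Lp.memLp Y).integrable (by norm_num))
        (fun s _ hμs => integrableOn_condExpL2_of_measure_ne_top hle hμs.ne Y)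
        (fun s hs hμs => integral_condExpL2_eq hle Y hs hμs.ne)
        (lpMeas.aestronglyMeasurable _)
    exact hμ0.trans h2.symm
  -- key : ⟪g, Y⟫ = ⟪g, μ0⟫
  have hgmeas : AEStronglyMeasurable[m𝒢] (g : Ω → ℝ) P :=
    hmeas g (hsub (Θn.orthogonalProjectionOnto α0).2)
  have hgY : ⟪g, Y⟫ = ⟪g, μ0⟫ := by
    rw [hμ0eq]
    have base := inner_condExpL2_eq_inner_fun (𝕜 := ℝ) hle Y g hgmeas
    exact (real_inner_comm Y g).trans (base.symm.trans (real_inner_comm g _))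
  -- adjointness facts
  have hproj_μn : (Θn.orthogonalProjectionOnto μn) = ⟨μn, hμn⟩ :=
    Submodule.orthogonalProjectionOnto_mem_subspace_eq_self (⟨μn, hμn⟩ : Θn)
  have hgμn : ⟪g, μn⟫ = ⟪α0, μn⟫ := by
    have := Θn.inner_starProjection_left_eq_right α0 μn
    simp only [Submodule.starProjection_apply] at this
    rw [hproj_μn] at this
    exact this
  have hgμ0 : ⟪g, μ0⟫ = ⟪α0, (Θn.orthogonalProjectionOnto μ0 : Lp ℝ 2 P)⟫ :=
    by simpa only [Submodule.starProjection_apply] using Θn.inner_starProjection_left_eq_right α0 μ0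
  -- rewrite the middle integral
  have hmid : ∫ ω, g ω * (Y ω - μn ω) ∂P = ⟪g, Y⟫ - ⟪g, μn⟫ := by
    have h1 : ∫ ω, g ω * (Y ω - μn ω) ∂P
        = ∫ ω, (g ω * Y ω - g ω * μn ω) ∂P := by
      refine integral_congr_ae (Filter.Eventually.of_forall fun ω => ?_)
      ring
    rw [h1, integral_sub (@integrable_mul_L2 Ω mΩ P g Y) (@integrable_mul_L2 Ω mΩ P g μn),
      @integral_mul_eq_inner Ω mΩ P g Y, @integral_mul_eq_inner Ω mΩ P g μn]
  rw [hRiesz, hRiesz, hmid]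
  simp only [hgY, hgμn, hgμ0]
  rw [@integral_mul_eq_inner Ω mΩ P α0 μn, @integral_mul_eq_inner Ω mΩ P α0 ((Θn.orthogonalProjectionOnto μ0 : Lp ℝ 2 P))]
  ring
end

section
/- Let (Ω, ℱ, P) be a probability space with sub-σ-algebras 𝒢 ⊆ ℋ ⊆ ℱ. Let A : Ω → ℝ be ℋ-measurable with A ∈ {0,1} P-almost surely, and let π be a 𝒢-measurable function with π = E[A | 𝒢] P-almost surely. Let Y ∈ L²(P), let m be a 𝒢-measurable version of E[Y | 𝒢], and suppose there is a bounded 𝒢-measurable function τ such that E[Y | ℋ] = m + (A − π)·τ P-almost surely. Then for every bounded 𝒢-measurable function τ̃: E[(Y − m − (A − π)·τ̃)²] = E[(Y − E[Y | ℋ])²] + E[π(1−π)(τ − τ̃)²]. Consequently, over any family of bounded 𝒢-measurable functions, τ̃ minimizes τ̃ ↦ E[(Y − m − (A − π)τ̃)²] if and only if τ̃ minimizes τ̃ ↦ E[π(1−π)(τ − τ̃)²]. -/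
open MeasureTheory

private lemma int_of_bd {Ω : Type*} {mΩ' : MeasurableSpace Ω} {P : Measure Ω} [IsFiniteMeasure P]
    {f : Ω → ℝ} (hf : AEStronglyMeasurable f P) {C : ℝ} (h : ∀ᵐ ω ∂P, ‖f ω‖ ≤ C) :
    Integrable f P :=
  (memLp_top_of_bound hf C h).integrable le_top

private lemma memℒp_two_condexp {Ω : Type*} {m m0 : MeasurableSpace Ω} (hm : m ≤ m0)
    (P : Measure Ω) [IsFiniteMeasure P] {f : Ω → ℝ} (hf : MemLp f 2 P) :
    MemLp (P[f|m]) 2 P := by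
  set fL := hf.toLp f with hfL
  have hcoe : (fL : Ω → ℝ) =ᵐ[P] f := hf.coeFn_toLp
  have hbridge : ((condExpL2 ℝ ℝ hm fL : Lp ℝ 2 P) : Ω → ℝ) =ᵐ[P] P[f|m] := by
    refine ae_eq_condExp_of_forall_setIntegral_eq hm (hf.integrable one_le_two)
      (fun s _ hμs => integrableOn_Lp_of_measure_ne_top _ one_le_two hμs.ne) ?_
      (aestronglyMeasurable_condExpL2 hm fL)
    intro s hs hμs
    rw [integral_condExpL2_eq hm fL hs hμs.ne]
    exact setIntegral_congr_ae (hm s hs) (hcoe.mono fun x hx _ => hx)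
  exact (Lp.memLp _).ae_eq hbridge

private lemma integral_mul_eq_mul_condexp {Ω : Type*} {m m0 : MeasurableSpace Ω} (hm : m ≤ m0)
    {P : Measure Ω} [IsProbabilityMeasure P] {f g : Ω → ℝ}
    (hg : StronglyMeasurable[m] g) {c : ℝ} (hgbd : ∀ᵐ x ∂P, ‖g x‖ ≤ c)
    (hf : Integrable f P) :
    ∫ x, g x * f x ∂P = ∫ x, g x * (P[f|m]) x ∂P := by
  have h1 : P[g * f|m] =ᵐ[P] g * P[f|m] :=
    condExp_stronglyMeasurable_mul_of_bound hm hg hf c hgbd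
  have h2 : ∫ x, (g * f) x ∂P = ∫ x, g x * f x ∂P := rfl
  rw [← h2, ← integral_condExp hm, integral_congr_ae h1]
  rfl

/-- The population R-learner objective decomposes as the irreducible error plus the
overlap-weighted distance to the CATE: for every bounded `𝒢`-measurable `τ̃`,
`E[(Y − m − (A−π)τ̃)²] = E[(Y − E[Y|ℋ])²] + E[π(1−π)(τ − τ̃)²]`; consequently over
any family of bounded `𝒢`-measurable functions, `τ̃` minimizes the first objective
iff it minimizes the second. -/
theorem stmt_5
    {Ω : Type*} [mΩ : MeasurableSpace Ω] (P : Measure Ω) [IsProbabilityMeasure P]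
    (m𝒢 m𝓗 : MeasurableSpace Ω) (hGH : m𝒢 ≤ m𝓗) (hHΩ : m𝓗 ≤ mΩ)
    (A : Ω → ℝ) (hA : Measurable[m𝓗] A) (hA01 : ∀ᵐ ω ∂P, A ω = 0 ∨ A ω = 1)
    (π : Ω → ℝ) (hπmeas : Measurable[m𝒢] π) (hπ : π =ᵐ[P] P[A|m𝒢])
    (Y : Ω → ℝ) (hY : MemLp Y 2 P)
    (m : Ω → ℝ) (hm : Measurable[m𝒢] m) (hmY : m =ᵐ[P] P[Y|m𝒢])
    (τ : Ω → ℝ) (hτ : Measurable[m𝒢] τ) (hτBd : ∃ C, ∀ ω, |τ ω| ≤ C)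
    (hreg : P[Y|m𝓗] =ᵐ[P] fun ω => m ω + (A ω - π ω) * τ ω) :
    (∀ t : Ω → ℝ, Measurable[m𝒢] t → (∃ C, ∀ ω, |t ω| ≤ C) →
      ∫ ω, (Y ω - m ω - (A ω - π ω) * t ω) ^ 2 ∂P
        = (∫ ω, (Y ω - (P[Y|m𝓗]) ω) ^ 2 ∂P)
          + ∫ ω, π ω * (1 - π ω) * (τ ω - t ω) ^ 2 ∂P) ∧
    (∀ T : Set (Ω → ℝ),
      (∀ s ∈ T, Measurable[m𝒢] s ∧ ∃ C, ∀ ω, |s ω| ≤ C) →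
      ∀ t ∈ T,
        ((∀ s ∈ T, ∫ ω, (Y ω - m ω - (A ω - π ω) * t ω) ^ 2 ∂P
              ≤ ∫ ω, (Y ω - m ω - (A ω - π ω) * s ω) ^ 2 ∂P) ↔
         (∀ s ∈ T, ∫ ω, π ω * (1 - π ω) * (τ ω - t ω) ^ 2 ∂P
              ≤ ∫ ω, π ω * (1 - π ω) * (τ ω - s ω) ^ 2 ∂P))) := by
  have hGΩ : m𝒢 ≤ mΩ := hGH.trans hHΩ
  obtain ⟨Cτ, hCτ⟩ := hτBd
  -- measurability facts (w.r.t. the ambient σ-algebra)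
  have hA' : Measurable[mΩ] A := hA.mono hHΩ le_rfl
  have hπ' : Measurable[mΩ] π := hπmeas.mono hGΩ le_rfl
  have hτ' : Measurable[mΩ] τ := hτ.mono hGΩ le_rfl
  -- A is a.e. bounded by 1, hence integrable
  have hAbd : ∀ᵐ ω ∂P, ‖A ω‖ ≤ 1 := by
    filter_upwards [hA01] with ω hω
    rcases hω with h | h <;> simp [h]
  have hAint : Integrable A P := int_of_bd hA'.aestronglyMeasurable hAbd
  -- π is a.e. in [0,1]
  have hπ01 : ∀ᵐ ω ∂P, 0 ≤ π ω ∧ π ω ≤ 1 := by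
    have hA0 : (0 : Ω → ℝ) ≤ᵐ[P] A := by
      filter_upwards [hA01] with ω hω
      rcases hω with h | h <;> simp [h]
    have hA1 : A ≤ᵐ[P] (fun _ => (1 : ℝ)) := by
      filter_upwards [hA01] with ω hω
      rcases hω with h | h <;> simp [h]
    have h0 : (0 : Ω → ℝ) ≤ᵐ[P] P[A|m𝒢] := condExp_nonneg hA0
    have h1 : P[A|m𝒢] ≤ᵐ[P] P[(fun _ => (1 : ℝ))|m𝒢] :=
      condExp_mono hAint (integrable_const 1) hA1
    have hc : P[(fun _ => (1 : ℝ))|m𝒢] = fun _ => (1 : ℝ) := condExp_const hGΩ 1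
    filter_upwards [h0, h1, hπ] with ω h0ω h1ω hπω
    rw [hc] at h1ω
    exact ⟨hπω ▸ h0ω, hπω ▸ h1ω⟩
  have hπbd : ∀ᵐ ω ∂P, ‖π ω‖ ≤ 1 := by
    filter_upwards [hπ01] with ω hω
    rw [Real.norm_eq_abs, abs_le]; exact ⟨by linarith [hω.1], hω.2⟩
  have hYint : Integrable Y P := hY.integrable one_le_two
  have hCE2 : MemLp (P[Y|m𝓗]) 2 P := memℒp_two_condexp hHΩ P hY
  have hεL2 : MemLp (fun ω => Y ω - (P[Y|m𝓗]) ω) 2 P := by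
    have := hY.sub hCE2
    simpa [Pi.sub_def] using this
  have hεint : Integrable (fun ω => Y ω - (P[Y|m𝓗]) ω) P := hεL2.integrable one_le_two
  have hε2int : Integrable (fun ω => (Y ω - (P[Y|m𝓗]) ω) ^ 2) P := hεL2.integrable_sq
  -- the key identity
  have key : ∀ t : Ω → ℝ, Measurable[m𝒢] t → (∃ C, ∀ ω, |t ω| ≤ C) →
      ∫ ω, (Y ω - m ω - (A ω - π ω) * t ω) ^ 2 ∂P
        = (∫ ω, (Y ω - (P[Y|m𝓗]) ω) ^ 2 ∂P)
          + ∫ ω, π ω * (1 - π ω) * (τ ω - t ω) ^ 2 ∂P := by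
    intro t ht ⟨Ct, hCt⟩
    have ht' : Measurable[mΩ] t := ht.mono hGΩ le_rfl
    set B : ℝ := |Cτ| + |Ct| with hB
    have hτtB : ∀ ω, |τ ω - t ω| ≤ B := fun ω =>
      (abs_sub _ _).trans (add_le_add ((hCτ ω).trans (le_abs_self _))
        ((hCt ω).trans (le_abs_self _)))
    set g : Ω → ℝ := fun ω => (A ω - π ω) * (τ ω - t ω) with hgdef
    have hg' : Measurable[mΩ] g := (hA'.sub hπ').mul (hτ'.sub ht')
    have hgH : StronglyMeasurable[m𝓗] g :=
      ((hA.sub (hπmeas.mono hGH le_rfl)).mul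
        ((hτ.mono hGH le_rfl).sub (ht.mono hGH le_rfl))).stronglyMeasurable
    have hgbd : ∀ᵐ ω ∂P, ‖g ω‖ ≤ 2 * B := by
      filter_upwards [hAbd, hπbd] with ω h1 h2
      have : ‖g ω‖ = |A ω - π ω| * |τ ω - t ω| := by
        simp [hgdef, abs_mul]
      rw [this]
      have hAπ : |A ω - π ω| ≤ 2 := by
        calc |A ω - π ω| ≤ |A ω| + |π ω| := abs_sub _ _
        _ ≤ 2 := by rw [Real.norm_eq_abs] at h1 h2; linarith
      exact mul_le_mul hAπ (hτtB ω) (abs_nonneg _) (by norm_num)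
    have hgint : Integrable g P := int_of_bd hg'.aestronglyMeasurable hgbd
    -- step 1 : rewrite the integrand
    have hae : (fun ω => (Y ω - m ω - (A ω - π ω) * t ω) ^ 2)
        =ᵐ[P] fun ω => ((Y ω - (P[Y|m𝓗]) ω) + g ω) ^ 2 := by
      filter_upwards [hreg] with ω hω
      have : (P[Y|m𝓗]) ω = m ω + (A ω - π ω) * τ ω := hω
      rw [this]; simp only [hgdef]; ring
    rw [integral_congr_ae hae]
    -- step 2 : expand the square
    have hgεint : Integrable (fun ω => g ω * (Y ω - (P[Y|m𝓗]) ω)) P :=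
      hεint.bdd_mul hg'.aestronglyMeasurable hgbd
    have hg2int : Integrable (fun ω => g ω ^ 2) P := by
      simp_rw [pow_two]
      exact hgint.bdd_mul hg'.aestronglyMeasurable hgbd
    have hexp : ∫ ω, ((Y ω - (P[Y|m𝓗]) ω) + g ω) ^ 2 ∂P
        = (∫ ω, (Y ω - (P[Y|m𝓗]) ω) ^ 2 ∂P)
          + ((2 : ℝ) * ∫ ω, g ω * (Y ω - (P[Y|m𝓗]) ω) ∂P + ∫ ω, g ω ^ 2 ∂P) := by
      have h1 : ∀ ω, ((Y ω - (P[Y|m𝓗]) ω) + g ω) ^ 2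
          = (Y ω - (P[Y|m𝓗]) ω) ^ 2 + (2 * (g ω * (Y ω - (P[Y|m𝓗]) ω)) + g ω ^ 2) := by
        intro ω; ring
      simp_rw [h1]
      have hsum2 : Integrable (fun ω => 2 * (g ω * (Y ω - (P[Y|m𝓗]) ω)) + g ω ^ 2) P :=
        (hgεint.const_mul 2).add hg2int
      have hsum1 : Integrable (fun ω => 2 * (g ω * (Y ω - (P[Y|m𝓗]) ω))) P :=
        hgεint.const_mul 2
      rw [integral_add hε2int hsum2, integral_add hsum1 hg2int, integral_const_mul]
    rw [hexp]
    -- step 3 : the cross term vanishes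
    have hcross : ∫ ω, g ω * (Y ω - (P[Y|m𝓗]) ω) ∂P = 0 := by
      have hsplit : ∫ ω, g ω * (Y ω - (P[Y|m𝓗]) ω) ∂P
          = (∫ ω, g ω * Y ω ∂P) - ∫ ω, g ω * (P[Y|m𝓗]) ω ∂P := by
        simp_rw [mul_sub]
        exact integral_sub (hYint.bdd_mul hg'.aestronglyMeasurable hgbd)
          (integrable_condExp.bdd_mul hg'.aestronglyMeasurable hgbd)
      rw [hsplit, integral_mul_eq_mul_condexp hHΩ hgH hgbd hYint, sub_self]
    rw [hcross]
    -- step 4 : the second moment term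
    have hmain : ∫ ω, g ω ^ 2 ∂P = ∫ ω, π ω * (1 - π ω) * (τ ω - t ω) ^ 2 ∂P := by
      set h : Ω → ℝ := fun ω => (τ ω - t ω) ^ 2 with hhdef
      set φ : Ω → ℝ := fun ω => (1 - 2 * π ω) * h ω with hφdef
      have hh' : Measurable[mΩ] h := (hτ'.sub ht').pow_const 2
      have hφ' : Measurable[mΩ] φ := ((measurable_const.sub (hπ'.const_mul 2)).mul hh')
      have hhbd : ∀ ω, ‖h ω‖ ≤ B ^ 2 := by
        intro ω
        rw [hhdef]
        simp only [Real.norm_eq_abs, abs_pow, sq_abs]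
        calc (τ ω - t ω) ^ 2 = |τ ω - t ω| ^ 2 := (sq_abs _).symm
        _ ≤ B ^ 2 := by
          have := hτtB ω
          nlinarith [abs_nonneg (τ ω - t ω)]
      have hφbd : ∀ᵐ ω ∂P, ‖φ ω‖ ≤ 3 * B ^ 2 := by
        filter_upwards [hπ01] with ω hω
        rw [hφdef]
        simp only [Real.norm_eq_abs, abs_mul]
        have h1 : |1 - 2 * π ω| ≤ 3 := by rw [abs_le]; constructor <;> linarith [hω.1, hω.2]
        have h2 := hhbd ω
        rw [Real.norm_eq_abs] at h2
        have := abs_nonneg (h ω)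
        nlinarith
      -- pointwise a.e.: g² = A·φ + π²·h
      have hpt : (fun ω => g ω ^ 2) =ᵐ[P] fun ω => A ω * φ ω + π ω ^ 2 * h ω := by
        filter_upwards [hA01] with ω hω
        rcases hω with h | h <;>
          simp only [hgdef, hφdef, hhdef, h] <;> ring
      rw [integral_congr_ae hpt]
      have hφint : Integrable φ P := int_of_bd hφ'.aestronglyMeasurable hφbd
      have hAφint : Integrable (fun ω => A ω * φ ω) P :=
        hφint.bdd_mul hA'.aestronglyMeasurable hAbd
      have hπ2bd : ∀ᵐ ω ∂P, ‖π ω ^ 2 * h ω‖ ≤ B ^ 2 := by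
        filter_upwards [hπ01] with ω hω
        rw [norm_mul]
        have h2 := hhbd ω
        have hp : ‖π ω ^ 2‖ ≤ 1 := by
          simp only [Real.norm_eq_abs, abs_pow, sq_abs]
          nlinarith [hω.1, hω.2]
        have := norm_nonneg (h ω)
        nlinarith [norm_nonneg (π ω ^ 2)]
      have hπ2int : Integrable (fun ω => π ω ^ 2 * h ω) P :=
        int_of_bd (((hπ'.pow_const 2).mul hh').aestronglyMeasurable) hπ2bd
      rw [integral_add hAφint hπ2int]
      -- replace ∫ A·φ by ∫ π·φ
      have hφG : StronglyMeasurable[m𝒢] φ :=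
        ((measurable_const.sub (hπmeas.const_mul 2)).mul
          ((hτ.sub ht).pow_const 2)).stronglyMeasurable
      have hAφ : ∫ ω, A ω * φ ω ∂P = ∫ ω, π ω * φ ω ∂P := by
        have h1 : ∫ ω, φ ω * A ω ∂P = ∫ ω, φ ω * (P[A|m𝒢]) ω ∂P :=
          integral_mul_eq_mul_condexp hGΩ hφG hφbd hAint
        have h2 : ∫ ω, φ ω * (P[A|m𝒢]) ω ∂P = ∫ ω, φ ω * π ω ∂P := by
          refine integral_congr_ae ?_
          filter_upwards [hπ] with ω hω
          rw [hω]
        have c1 : ∫ ω, A ω * φ ω ∂P = ∫ ω, φ ω * A ω ∂P :=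
          integral_congr_ae (Filter.Eventually.of_forall fun ω => mul_comm _ _)
        have c2 : ∫ ω, φ ω * π ω ∂P = ∫ ω, π ω * φ ω ∂P :=
          integral_congr_ae (Filter.Eventually.of_forall fun ω => mul_comm _ _)
        rw [c1, h1, h2, c2]
      rw [hAφ]
      have hπφint : Integrable (fun ω => π ω * φ ω) P := by
        refine int_of_bd ((hπ'.mul hφ').aestronglyMeasurable) (C := 3 * B ^ 2) ?_
        filter_upwards [hφbd, hπbd] with ω h1 h2
        rw [norm_mul]
        have := norm_nonneg (φ ω)
        nlinarith [norm_nonneg (π ω)]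
      rw [← integral_add hπφint hπ2int]
      refine integral_congr_ae (Filter.Eventually.of_forall fun ω => ?_)
      simp only [hφdef, hhdef]; ring
    rw [hmain]; ring
  refine ⟨key, ?_⟩
  intro T hT t htT
  constructor <;> intro h s hs
  · have e1 := key t (hT t htT).1 (hT t htT).2
    have e2 := key s (hT s hs).1 (hT s hs).2
    have := h s hs
    linarith
  · have e1 := key t (hT t htT).1 (hT t htT).2
    have e2 := key s (hT s hs).1 (hT s hs).2
    have := h s hs
    linarith
end

section
/- Let (Ω, ℱ, P) be a probability space with sub-σ-algebras 𝒢 ⊆ ℋ ⊆ ℱ. Let A : Ω → ℝ be ℋ-measurable with A ∈ {0,1} P-almost surely, and let π be a 𝒢-measurable function with π = E[A | 𝒢] P-almost surely. Let 𝒯₀ be a set of bounded 𝒢-measurable functions and suppose γ* ∈ 𝒯₀ satisfies E[π(1−π)(γ*)² − 2γ*] ≤ E[π(1−π)γ² − 2γ] for all γ ∈ 𝒯₀. Then the function α* := (A − π)·γ* satisfies E[(α*)²] = E[π(1−π)(γ*)²], and for every square-integrable 𝒢-measurable function m and every γ ∈ 𝒯₀: E[(α*)² − 2γ*] ≤ E[(m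 + A·γ)² − 2γ]. -/
open MeasureTheory

private lemma int_of_bdd {Ω : Type*} [MeasurableSpace Ω] {P : Measure Ω} [IsFiniteMeasure P]
    {f : Ω → ℝ} (hf : AEStronglyMeasurable f P) {C : ℝ} (h : ∀ᵐ ω ∂P, |f ω| ≤ C) :
    Integrable f P :=
  Integrable.mono' (integrable_const C) hf (by simpa [Real.norm_eq_abs] using h)

private lemma pullout {Ω : Type*} [mΩ : MeasurableSpace Ω] {P : Measure Ω}
    [IsProbabilityMeasure P] {m𝒢 : MeasurableSpace Ω} (hm : m𝒢 ≤ mΩ) {A π f : Ω → ℝ}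
    (hπ : π =ᵐ[P] P[A|m𝒢]) (hAint : Integrable A P)
    (hf : StronglyMeasurable[m𝒢] f) (hfA : Integrable (f * A) P) :
    ∫ ω, f ω * A ω ∂P = ∫ ω, f ω * π ω ∂P := by
  calc ∫ ω, f ω * A ω ∂P = ∫ ω, (P[f * A|m𝒢]) ω ∂P := (integral_condExp hm).symm
    _ = ∫ ω, f ω * (P[A|m𝒢]) ω ∂P :=
        integral_congr_ae (condExp_mul_of_stronglyMeasurable_left hf hfA hAint)
    _ = ∫ ω, f ω * π ω ∂P := integral_congr_ae (by filter_upwards [hπ] with ω h; rw [h])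

/-- Profiling argument for the Riesz representer of the ATE functional over a partially
linear model: if `γ*` minimizes `γ ↦ E[π(1−π)γ² − 2γ]` over a class `𝒯₀` of bounded
`𝒢`-measurable functions, then `α* := (A − π)·γ*` satisfies
`E[(α*)²] = E[π(1−π)(γ*)²]` and `E[(α*)² − 2γ*] ≤ E[(m + A·γ)² − 2γ]` for every
square-integrable `𝒢`-measurable `m` and every `γ ∈ 𝒯₀`. -/
theorem stmt_6
    {Ω : Type*} [mΩ : MeasurableSpace Ω] (P : Measure Ω) [IsProbabilityMeasure P]
    (m𝒢 m𝓗 : MeasurableSpace Ω) (hGH : m𝒢 ≤ m𝓗) (hHΩ : m𝓗 ≤ mΩ)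
    (A : Ω → ℝ) (hA : Measurable[m𝓗] A) (hA01 : ∀ᵐ ω ∂P, A ω = 0 ∨ A ω = 1)
    (π : Ω → ℝ) (hπmeas : Measurable[m𝒢] π) (hπ : π =ᵐ[P] P[A|m𝒢])
    (T : Set (Ω → ℝ)) (hT : ∀ γ ∈ T, Measurable[m𝒢] γ ∧ ∃ C, ∀ ω, |γ ω| ≤ C)
    (γs : Ω → ℝ) (hγs : γs ∈ T)
    (hmin : ∀ γ ∈ T,
      ∫ ω, (π ω * (1 - π ω) * γs ω ^ 2 - 2 * γs ω) ∂P
        ≤ ∫ ω, (π ω * (1 - π ω) * γ ω ^ 2 - 2 * γ ω) ∂P) :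
    (∫ ω, ((A ω - π ω) * γs ω) ^ 2 ∂P = ∫ ω, π ω * (1 - π ω) * γs ω ^ 2 ∂P) ∧
    (∀ m : Ω → ℝ, Measurable[m𝒢] m → MemLp m 2 P → ∀ γ ∈ T,
      ∫ ω, (((A ω - π ω) * γs ω) ^ 2 - 2 * γs ω) ∂P
        ≤ ∫ ω, ((m ω + A ω * γ ω) ^ 2 - 2 * γ ω) ∂P) := by
  letI : MeasurableSpace Ω := mΩ
  have hmG : m𝒢 ≤ mΩ := hGH.trans hHΩ
  have hπm : Measurable[mΩ] π := hπmeas.mono hmG le_rfl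
  have hAm : Measurable[mΩ] A := hA.mono hHΩ le_rfl
  have hAbd : ∀ᵐ ω ∂P, |A ω| ≤ 1 := by
    filter_upwards [hA01] with ω h
    rcases h with h | h <;> simp [h]
  have hAint : Integrable A P := int_of_bdd hAm.aestronglyMeasurable hAbd
  have hπ01 : ∀ᵐ ω ∂P, 0 ≤ π ω ∧ π ω ≤ 1 := by
    have h0 : 0 ≤ᵐ[P] P[A|m𝒢] := condExp_nonneg (by
      filter_upwards [hA01] with ω h
      rcases h with h | h <;> simp [h])
    have h1 : P[A|m𝒢] ≤ᵐ[P] fun _ => (1 : ℝ) := by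
      have := condExp_mono (μ := P) (m := m𝒢) hAint (integrable_const (1 : ℝ))
        (by filter_upwards [hA01] with ω h; rcases h with h | h <;> simp [h])
      rwa [condExp_const hmG] at this
    filter_upwards [hπ, h0, h1] with ω he ha hb
    rw [he]; exact ⟨ha, hb⟩
  -- key identity for bounded 𝒢-measurable γ
  have hkey : ∀ γ : Ω → ℝ, Measurable[m𝒢] γ → (∃ C, ∀ ω, |γ ω| ≤ C) →
      ∫ ω, ((A ω - π ω) * γ ω) ^ 2 ∂P = ∫ ω, π ω * (1 - π ω) * γ ω ^ 2 ∂P := by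
    rintro γ hγm ⟨C0, hC0⟩
    set C := max C0 0 with hCdef
    have hC : ∀ ω, |γ ω| ≤ C := fun ω => (hC0 ω).trans (le_max_left _ _)
    have hC0' : (0 : ℝ) ≤ C := le_max_right _ _
    have hγ : Measurable[mΩ] γ := hγm.mono hmG le_rfl
    have hγsq : ∀ ω, γ ω ^ 2 ≤ C ^ 2 := by
      intro ω
      calc γ ω ^ 2 = |γ ω| ^ 2 := (sq_abs _).symm
        _ ≤ C ^ 2 := pow_le_pow_left₀ (abs_nonneg _) (hC ω) 2
    set f : Ω → ℝ := fun ω => (1 - 2 * π ω) * γ ω ^ 2 with hfdef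
    have hfsm : StronglyMeasurable[m𝒢] f :=
      ((measurable_const.sub (hπmeas.const_mul 2)).mul (hγm.pow_const 2)).stronglyMeasurable
    have hfm : Measurable[mΩ] f := (measurable_const.sub (hπm.const_mul 2)).mul (hγ.pow_const 2)
    have hfbd : ∀ᵐ ω ∂P, |f ω| ≤ C ^ 2 := by
      filter_upwards [hπ01] with ω ⟨h0, h1⟩
      have h2 : |1 - 2 * π ω| ≤ 1 := abs_le.2 ⟨by linarith, by linarith⟩
      calc |f ω| = |1 - 2 * π ω| * |γ ω ^ 2| := abs_mul _ _
        _ ≤ 1 * C ^ 2 := by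
            apply mul_le_mul h2 _ (abs_nonneg _) zero_le_one
            rw [abs_of_nonneg (sq_nonneg _)]; exact hγsq ω
        _ = C ^ 2 := one_mul _
    have intfA : Integrable (f * A) P := by
      apply int_of_bdd ((hfm.mul hAm).aestronglyMeasurable) (C := C ^ 2)
      filter_upwards [hfbd, hAbd] with ω h1 h2
      calc |f ω * A ω| = |f ω| * |A ω| := abs_mul _ _
        _ ≤ C ^ 2 * 1 := mul_le_mul h1 h2 (abs_nonneg _) (by positivity)
        _ = C ^ 2 := mul_one _
    have intfπ : Integrable (fun ω => f ω * π ω) P := by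
      apply int_of_bdd ((hfm.mul hπm).aestronglyMeasurable) (C := C ^ 2)
      filter_upwards [hfbd, hπ01] with ω h1 ⟨h2, h3⟩
      calc |f ω * π ω| = |f ω| * |π ω| := abs_mul _ _
        _ ≤ C ^ 2 * 1 := mul_le_mul h1 (abs_le.2 ⟨by linarith, h3⟩) (abs_nonneg _) (by positivity)
        _ = C ^ 2 := mul_one _
    have intπ2 : Integrable (fun ω => π ω ^ 2 * γ ω ^ 2) P := by
      apply int_of_bdd (((hπm.pow_const 2).mul (hγ.pow_const 2)).aestronglyMeasurable)
        (C := C ^ 2)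
      filter_upwards [hπ01] with ω ⟨h0, h1⟩
      have hπ2 : π ω ^ 2 ≤ 1 := by nlinarith
      show |π ω ^ 2 * γ ω ^ 2| ≤ C ^ 2
      rw [abs_of_nonneg (by positivity)]
      nlinarith [hγsq ω, sq_nonneg (γ ω)]
    have h_ae : (fun ω => ((A ω - π ω) * γ ω) ^ 2)
        =ᵐ[P] fun ω => f ω * A ω + π ω ^ 2 * γ ω ^ 2 := by
      filter_upwards [hA01] with ω h
      rcases h with h | h <;> simp only [hfdef, h] <;> ring
    calc ∫ ω, ((A ω - π ω) * γ ω) ^ 2 ∂P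
        = ∫ ω, (f ω * A ω + π ω ^ 2 * γ ω ^ 2) ∂P := integral_congr_ae h_ae
      _ = (∫ ω, f ω * A ω ∂P) + ∫ ω, π ω ^ 2 * γ ω ^ 2 ∂P := integral_add intfA intπ2
      _ = (∫ ω, f ω * π ω ∂P) + ∫ ω, π ω ^ 2 * γ ω ^ 2 ∂P := by
          rw [pullout hmG hπ hAint hfsm intfA]
      _ = ∫ ω, (f ω * π ω + π ω ^ 2 * γ ω ^ 2) ∂P := (integral_add intfπ intπ2).symm
      _ = ∫ ω, π ω * (1 - π ω) * γ ω ^ 2 ∂P := by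
          apply integral_congr_ae
          filter_upwards with ω
          simp only [hfdef]; ring
  obtain ⟨hγsm, Cs0, hCs0⟩ := hT γs hγs
  refine ⟨hkey γs hγsm ⟨Cs0, hCs0⟩, ?_⟩
  intro m hmmeas hm2 γ hγT
  obtain ⟨hγm, Cg0, hCg0⟩ := hT γ hγT
  set Cs := max Cs0 0 with hCsdef
  have hCs : ∀ ω, |γs ω| ≤ Cs := fun ω => (hCs0 ω).trans (le_max_left _ _)
  set Cg := max Cg0 0 with hCgdef
  have hCg : ∀ ω, |γ ω| ≤ Cg := fun ω => (hCg0 ω).trans (le_max_left _ _)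
  have hγ : Measurable[mΩ] γ := hγm.mono hmG le_rfl
  have hγsmeas : Measurable[mΩ] γs := hγsm.mono hmG le_rfl
  have hmm : Measurable[mΩ] m := hmmeas.mono hmG le_rfl
  have hmint : Integrable m P := hm2.integrable one_le_two
  -- u = m + πγ
  set u : Ω → ℝ := fun ω => m ω + π ω * γ ω with hudef
  have hπγ2 : MemLp (fun ω => π ω * γ ω) 2 P := by
    apply MemLp.of_bound (hπm.mul hγ).aestronglyMeasurable Cg
    filter_upwards [hπ01] with ω ⟨h0, h1⟩
    rw [Real.norm_eq_abs, Pi.mul_apply, abs_mul]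
    calc |π ω| * |γ ω| ≤ 1 * Cg :=
          mul_le_mul (abs_le.2 ⟨by linarith, h1⟩) (hCg ω) (abs_nonneg _) zero_le_one
      _ = Cg := one_mul _
  have hu2 : MemLp u 2 P := hm2.add hπγ2
  have int_u_sq : Integrable (fun ω => u ω ^ 2) P := hu2.integrable_sq
  have int_v_sq : Integrable (fun ω => ((A ω - π ω) * γ ω) ^ 2) P := by
    apply int_of_bdd ((((hAm.sub hπm).mul hγ).pow_const 2).aestronglyMeasurable) (C := ((1 + 1) * Cg) ^ 2)
    filter_upwards [hπ01, hAbd] with ω ⟨h0, h1⟩ h2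
    rw [abs_of_nonneg (sq_nonneg _)]
    have h3 : |(A ω - π ω) * γ ω| ≤ (1 + 1) * Cg := by
      rw [abs_mul]
      apply mul_le_mul _ (hCg ω) (abs_nonneg _) (by norm_num)
      calc |A ω - π ω| ≤ |A ω| + |π ω| := abs_sub _ _
        _ ≤ 1 + 1 := add_le_add h2 (abs_le.2 ⟨by linarith, h1⟩)
    calc ((A ω - π ω) * γ ω) ^ 2 = |(A ω - π ω) * γ ω| ^ 2 := (sq_abs _).symm
      _ ≤ ((1 + 1) * Cg) ^ 2 := pow_le_pow_left₀ (abs_nonneg _) h3 2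
  -- cross term
  set f₂ : Ω → ℝ := fun ω => 2 * (u ω * γ ω) with hf2def
  have hf2sm : StronglyMeasurable[m𝒢] f₂ :=
    (((hmmeas.add (hπmeas.mul hγm)).mul hγm).const_mul 2).stronglyMeasurable
  have huint : Integrable u P := hu2.integrable one_le_two
  have int_f2A : Integrable (fun ω => f₂ ω * A ω) P := by
    have h := Integrable.bdd_mul (c := 2 * Cg * 1) huint
      (f := fun ω => 2 * γ ω * A ω) ((hγ.const_mul 2).mul hAm).aestronglyMeasurable
      (by
        filter_upwards [hAbd] with ω h2
        rw [Real.norm_eq_abs, abs_mul, abs_mul, abs_two]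
        apply mul_le_mul _ h2 (abs_nonneg _) (by positivity)
        exact mul_le_mul le_rfl (hCg ω) (abs_nonneg _) (by norm_num))
    exact h.congr (Filter.Eventually.of_forall fun ω => by simp only [hf2def]; ring)
  have int_f2A' : Integrable (f₂ * A) P := int_f2A
  have int_f2π : Integrable (fun ω => f₂ ω * π ω) P := by
    have h := Integrable.bdd_mul (c := 2 * Cg * 1) huint
      (f := fun ω => 2 * γ ω * π ω) ((hγ.const_mul 2).mul hπm).aestronglyMeasurable
      (by
        filter_upwards [hπ01] with ω ⟨h0, h1⟩
        rw [Real.norm_eq_abs, abs_mul, abs_mul, abs_two]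
        apply mul_le_mul _ (abs_le.2 ⟨by linarith, h1⟩) (abs_nonneg _) (by positivity)
        exact mul_le_mul le_rfl (hCg ω) (abs_nonneg _) (by norm_num))
    exact h.congr (Filter.Eventually.of_forall fun ω => by simp only [hf2def]; ring)
  have hcross : ∫ ω, f₂ ω * (A ω - π ω) ∂P = 0 := by
    have hp := pullout hmG hπ hAint hf2sm int_f2A'
    have h2 : ∫ ω, (f₂ ω * A ω - f₂ ω * π ω) ∂P
        = (∫ ω, f₂ ω * A ω ∂P) - ∫ ω, f₂ ω * π ω ∂P := integral_sub int_f2A int_f2π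
    have h3 : ∫ ω, f₂ ω * (A ω - π ω) ∂P = ∫ ω, (f₂ ω * A ω - f₂ ω * π ω) ∂P :=
      integral_congr_ae (Filter.Eventually.of_forall fun ω => by ring)
    rw [h3, h2, hp, sub_self]
  have int_mAγ_sq : Integrable (fun ω => (m ω + A ω * γ ω) ^ 2) P := by
    have h : (fun ω => (m ω + A ω * γ ω) ^ 2)
        = fun ω => u ω ^ 2 + ((A ω - π ω) * γ ω) ^ 2 + f₂ ω * (A ω - π ω) := by
      funext ω; simp only [hudef, hf2def]; ring
    rw [h]
    exact (int_u_sq.add int_v_sq).add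
      ((int_f2A.sub int_f2π).congr (Filter.Eventually.of_forall fun ω => by
        simp only [Pi.sub_apply, Pi.mul_apply]; ring))
  have hsq : ∫ ω, π ω * (1 - π ω) * γ ω ^ 2 ∂P ≤ ∫ ω, (m ω + A ω * γ ω) ^ 2 ∂P := by
    have hexp : ∫ ω, (m ω + A ω * γ ω) ^ 2 ∂P
        = (∫ ω, u ω ^ 2 ∂P) + (∫ ω, ((A ω - π ω) * γ ω) ^ 2 ∂P)
          + ∫ ω, f₂ ω * (A ω - π ω) ∂P := by
      have intcross : Integrable (fun ω => f₂ ω * (A ω - π ω)) P :=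
        (int_f2A.sub int_f2π).congr (Filter.Eventually.of_forall fun ω => by
          simp only [Pi.sub_apply]; ring)
      have intuv : Integrable (fun ω => u ω ^ 2 + ((A ω - π ω) * γ ω) ^ 2) P :=
        int_u_sq.add int_v_sq
      have e0 : ∫ ω, (m ω + A ω * γ ω) ^ 2 ∂P
          = ∫ ω, (u ω ^ 2 + ((A ω - π ω) * γ ω) ^ 2 + f₂ ω * (A ω - π ω)) ∂P :=
        integral_congr_ae (Filter.Eventually.of_forall fun ω => by
          simp only [hudef, hf2def]; ring)
      have e2 : ∫ ω, (u ω ^ 2 + ((A ω - π ω) * γ ω) ^ 2 + f₂ ω * (A ω - π ω)) ∂P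
          = (∫ ω, (u ω ^ 2 + ((A ω - π ω) * γ ω) ^ 2) ∂P)
            + ∫ ω, f₂ ω * (A ω - π ω) ∂P := integral_add intuv intcross
      have e1 : ∫ ω, (u ω ^ 2 + ((A ω - π ω) * γ ω) ^ 2) ∂P
          = (∫ ω, u ω ^ 2 ∂P) + ∫ ω, ((A ω - π ω) * γ ω) ^ 2 ∂P :=
        integral_add int_u_sq int_v_sq
      rw [e0, e2, e1]
    have hu_nonneg : 0 ≤ ∫ ω, u ω ^ 2 ∂P := integral_nonneg fun ω => sq_nonneg _
    rw [hexp, hcross, ← hkey γ hγm ⟨Cg0, hCg0⟩]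
    linarith
  -- remaining integrability for splitting
  have intγ : Integrable γ P :=
    int_of_bdd hγ.aestronglyMeasurable (Filter.Eventually.of_forall hCg)
  have intγs : Integrable γs P :=
    int_of_bdd hγsmeas.aestronglyMeasurable (Filter.Eventually.of_forall hCs)
  have int_pig : ∀ (δ : Ω → ℝ) (hδ : Measurable[mΩ] δ) (Cδ : ℝ) (hCδ : ∀ ω, |δ ω| ≤ Cδ),
      Integrable (fun ω => π ω * (1 - π ω) * δ ω ^ 2) P := by
    intro δ hδ Cδ hCδ
    apply int_of_bdd ((hπm.mul (measurable_const.sub hπm)).mul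
      (hδ.pow_const 2)).aestronglyMeasurable (C := Cδ ^ 2)
    filter_upwards [hπ01] with ω ⟨h0, h1⟩
    have hp0 : 0 ≤ π ω * (1 - π ω) := mul_nonneg h0 (by linarith)
    have hp1 : π ω * (1 - π ω) ≤ 1 := by nlinarith
    have hd2 : δ ω ^ 2 ≤ Cδ ^ 2 := by
      calc δ ω ^ 2 = |δ ω| ^ 2 := (sq_abs _).symm
        _ ≤ Cδ ^ 2 := pow_le_pow_left₀ (abs_nonneg _) (hCδ ω) 2
    show |π ω * (1 - π ω) * δ ω ^ 2| ≤ Cδ ^ 2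
    rw [abs_of_nonneg (mul_nonneg hp0 (sq_nonneg _))]
    calc π ω * (1 - π ω) * δ ω ^ 2 ≤ 1 * δ ω ^ 2 :=
          mul_le_mul_of_nonneg_right hp1 (sq_nonneg _)
      _ = δ ω ^ 2 := one_mul _
      _ ≤ Cδ ^ 2 := hd2
  have int_left_sq : Integrable (fun ω => ((A ω - π ω) * γs ω) ^ 2) P := by
    apply int_of_bdd ((((hAm.sub hπm).mul hγsmeas).pow_const 2).aestronglyMeasurable)
      (C := ((1 + 1) * Cs) ^ 2)
    filter_upwards [hπ01, hAbd] with ω ⟨h0, h1⟩ h2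
    rw [abs_of_nonneg (sq_nonneg _)]
    have h3 : |(A ω - π ω) * γs ω| ≤ (1 + 1) * Cs := by
      rw [abs_mul]
      apply mul_le_mul _ (hCs ω) (abs_nonneg _) (by norm_num)
      calc |A ω - π ω| ≤ |A ω| + |π ω| := abs_sub _ _
        _ ≤ 1 + 1 := add_le_add h2 (abs_le.2 ⟨by linarith, h1⟩)
    calc ((A ω - π ω) * γs ω) ^ 2 = |(A ω - π ω) * γs ω| ^ 2 := (sq_abs _).symm
      _ ≤ ((1 + 1) * Cs) ^ 2 := pow_le_pow_left₀ (abs_nonneg _) h3 2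
  calc ∫ ω, (((A ω - π ω) * γs ω) ^ 2 - 2 * γs ω) ∂P
      = (∫ ω, ((A ω - π ω) * γs ω) ^ 2 ∂P) - ∫ ω, 2 * γs ω ∂P :=
        integral_sub int_left_sq (intγs.const_mul 2)
    _ = (∫ ω, π ω * (1 - π ω) * γs ω ^ 2 ∂P) - ∫ ω, 2 * γs ω ∂P := by
        rw [hkey γs hγsm ⟨Cs0, hCs0⟩]
    _ = ∫ ω, (π ω * (1 - π ω) * γs ω ^ 2 - 2 * γs ω) ∂P :=
        (integral_sub (int_pig γs hγsmeas Cs hCs) (intγs.const_mul 2)).symm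
    _ ≤ ∫ ω, (π ω * (1 - π ω) * γ ω ^ 2 - 2 * γ ω) ∂P := hmin γ hγT
    _ = (∫ ω, π ω * (1 - π ω) * γ ω ^ 2 ∂P) - ∫ ω, 2 * γ ω ∂P :=
        integral_sub (int_pig γ hγ Cg hCg) (intγ.const_mul 2)
    _ ≤ (∫ ω, (m ω + A ω * γ ω) ^ 2 ∂P) - ∫ ω, 2 * γ ω ∂P := by linarith
    _ = ∫ ω, ((m ω + A ω * γ ω) ^ 2 - 2 * γ ω) ∂P :=
        (integral_sub int_mAγ_sq (intγ.const_mul 2)).symm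
end

section
/- Let (Ω, ℱ, P) be a probability space with sub-σ-algebras 𝒢 ⊆ ℋ ⊆ ℱ. Let A : Ω → ℝ be ℋ-measurable with A ∈ {0,1} P-almost surely, and let π₀ be a 𝒢-measurable function with π₀ = E[A | 𝒢] P-almost surely. Let Y ∈ L²(P), and let m₀, mₙ, τ₀, τₙ, t, γ, πₙ be bounded 𝒢-measurable functions such that E[Y | ℋ] = m₀ + (A − π₀)·τ₀ P-almost surely and such that: (i) E[γ·(A − π₀)²·(τ₀ − t)] = 0, and (ii) E[γ·(A − π₀)²·(τₙ − t)] = E[τₙ − t]. Define μₙ := mₙ + (A − πₙ)·τₙ. Then E[γ·(A − πₙ)·(Y − μₙ)] + E[τₙ] − E[t] = E[γ·(π₀ − πₙ)·(m₀ − mₙ)] − E[γ·(π₀ − πₙ)²·τₙ]. -/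
open MeasureTheory

def AEBdd {Ω : Type*} [MeasurableSpace Ω] (P : Measure Ω) (f : Ω → ℝ) : Prop :=
  AEStronglyMeasurable f P ∧ ∃ C, ∀ᵐ ω ∂P, |f ω| ≤ C

namespace AEBdd
variable {Ω : Type*} [MeasurableSpace Ω] {P : Measure Ω} {f g : Ω → ℝ}
theorem mul (hf : AEBdd P f) (hg : AEBdd P g) : AEBdd P (fun ω => f ω * g ω) := by
  obtain ⟨hfm, C, hC⟩ := hf
  obtain ⟨hgm, D, hD⟩ := hg
  refine ⟨hfm.mul hgm, C * D, ?_⟩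
  filter_upwards [hC, hD] with ω h1 h2
  rw [abs_mul]
  exact mul_le_mul h1 h2 (abs_nonneg _) (le_trans (abs_nonneg _) h1)
theorem sub (hf : AEBdd P f) (hg : AEBdd P g) : AEBdd P (fun ω => f ω - g ω) := by
  obtain ⟨hfm, C, hC⟩ := hf
  obtain ⟨hgm, D, hD⟩ := hg
  refine ⟨hfm.sub hgm, C + D, ?_⟩
  filter_upwards [hC, hD] with ω h1 h2
  calc |f ω - g ω| ≤ |f ω| + |g ω| := abs_sub _ _
    _ ≤ C + D := add_le_add h1 h2
theorem add (hf : AEBdd P f) (hg : AEBdd P g) : AEBdd P (fun ω => f ω + g ω) := by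
  obtain ⟨hfm, C, hC⟩ := hf
  obtain ⟨hgm, D, hD⟩ := hg
  refine ⟨hfm.add hgm, C + D, ?_⟩
  filter_upwards [hC, hD] with ω h1 h2
  calc |f ω + g ω| ≤ |f ω| + |g ω| := abs_add_le _ _
    _ ≤ C + D := add_le_add h1 h2
theorem sq (hf : AEBdd P f) : AEBdd P (fun ω => f ω ^ 2) := by
  have := hf.mul hf
  simpa [pow_two] using this
theorem integrable [IsFiniteMeasure P] (hf : AEBdd P f) : Integrable f P := by
  obtain ⟨hfm, C, hC⟩ := hf
  refine Integrable.mono' (integrable_const C) hfm ?_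
  simpa [Real.norm_eq_abs] using hC
theorem mul_integrable (hf : AEBdd P f) (hg : Integrable g P) :
    Integrable (fun ω => f ω * g ω) P := by
  obtain ⟨hfm, C, hC⟩ := hf
  exact Integrable.bdd_mul hg hfm (by simpa [Real.norm_eq_abs] using hC)
end AEBdd

theorem integral_mul_eq_integral_mul_condexp {Ω : Type*} [mΩ : MeasurableSpace Ω]
    (P : Measure Ω) [IsProbabilityMeasure P] {m : MeasurableSpace Ω} (hm : m ≤ mΩ)
    {f g : Ω → ℝ} (hf : StronglyMeasurable[m] f) {c : ℝ} (hb : ∀ᵐ ω ∂P, |f ω| ≤ c)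
    (hg : Integrable g P) :
    ∫ ω, f ω * g ω ∂P = ∫ ω, f ω * (P[g|m]) ω ∂P := by
  have hbn : ∀ᵐ ω ∂P, ‖f ω‖ ≤ c := by simpa [Real.norm_eq_abs] using hb
  have h1 : P[f * g|m] =ᵐ[P] f * P[g|m] :=
    condExp_stronglyMeasurable_mul_of_bound hm hf hg c hbn
  have h2 : ∫ ω, (P[f * g|m]) ω ∂P = ∫ ω, (f * g) ω ∂P := integral_condExp hm
  calc ∫ ω, f ω * g ω ∂P = ∫ ω, (f * g) ω ∂P := rfl
    _ = ∫ ω, (P[f * g|m]) ω ∂P := h2.symm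
    _ = ∫ ω, (f * P[g|m]) ω ∂P := integral_congr_ae h1
    _ = ∫ ω, f ω * (P[g|m]) ω ∂P := rfl

theorem stmt_8_aux
    {Ω : Type*} (m𝒢 m𝓗 : MeasurableSpace Ω) [mΩ : MeasurableSpace Ω]
    (P : Measure Ω) [IsProbabilityMeasure P] (hGH : m𝒢 ≤ m𝓗) (hHΩ : m𝓗 ≤ mΩ)
    (A : Ω → ℝ) (hA : Measurable[m𝓗] A) (hA01 : ∀ᵐ ω ∂P, A ω = 0 ∨ A ω = 1)
    (π0 : Ω → ℝ) (hπ0meas : Measurable[m𝒢] π0) (hπ0 : π0 =ᵐ[P] P[A|m𝒢])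
    (Y : Ω → ℝ) (hY : MemLp Y 2 P)
    (m0 mn τ0 τn t γ πn : Ω → ℝ)
    (hm0 : Measurable[m𝒢] m0) (hm0b : ∃ C, ∀ ω, |m0 ω| ≤ C)
    (hmn : Measurable[m𝒢] mn) (hmnb : ∃ C, ∀ ω, |mn ω| ≤ C)
    (hτ0 : Measurable[m𝒢] τ0) (hτ0b : ∃ C, ∀ ω, |τ0 ω| ≤ C)
    (hτn : Measurable[m𝒢] τn) (hτnb : ∃ C, ∀ ω, |τn ω| ≤ C)
    (ht : Measurable[m𝒢] t) (htb : ∃ C, ∀ ω, |t ω| ≤ C)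
    (hγ : Measurable[m𝒢] γ) (hγb : ∃ C, ∀ ω, |γ ω| ≤ C)
    (hπn : Measurable[m𝒢] πn) (hπnb : ∃ C, ∀ ω, |πn ω| ≤ C)
    (hreg : P[Y|m𝓗] =ᵐ[P] fun ω => m0 ω + (A ω - π0 ω) * τ0 ω)
    (hi : ∫ ω, γ ω * (A ω - π0 ω) ^ 2 * (τ0 ω - t ω) ∂P = 0)
    (hii : ∫ ω, γ ω * (A ω - π0 ω) ^ 2 * (τn ω - t ω) ∂P
            = ∫ ω, (τn ω - t ω) ∂P) :
    (∫ ω, γ ω * (A ω - πn ω) * (Y ω - (mn ω + (A ω - πn ω) * τn ω)) ∂P)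
      + (∫ ω, τn ω ∂P) - (∫ ω, t ω ∂P)
    = (∫ ω, γ ω * (π0 ω - πn ω) * (m0 ω - mn ω) ∂P)
      - ∫ ω, γ ω * (π0 ω - πn ω) ^ 2 * τn ω ∂P := by
  have hGΩ : m𝒢 ≤ mΩ := hGH.trans hHΩ
  -- AEBdd facts
  have bddOf : ∀ {f : Ω → ℝ}, Measurable[m𝒢] f → (∃ C, ∀ ω, |f ω| ≤ C) → AEBdd P f := by
    rintro f hf ⟨C, hC⟩
    exact ⟨(hf.mono hGΩ le_rfl).aestronglyMeasurable, C, Filter.Eventually.of_forall hC⟩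
  have bm0 := bddOf hm0 hm0b
  have bmn := bddOf hmn hmnb
  have bτ0 := bddOf hτ0 hτ0b
  have bτn := bddOf hτn hτnb
  have bt := bddOf ht htb
  have bγ := bddOf hγ hγb
  have bπn := bddOf hπn hπnb
  have bA : AEBdd P A := by
    refine ⟨(hA.mono hHΩ le_rfl).aestronglyMeasurable, 1, ?_⟩
    filter_upwards [hA01] with ω h
    rcases h with h | h <;> simp [h]
  -- a.e. bound for π0
  have hA01' : 0 ≤ᵐ[P] A ∧ A ≤ᵐ[P] (fun _ => (1 : ℝ)) := by
    constructor <;> · filter_upwards [hA01] with ω h; rcases h with h | h <;> simp [h]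
  have hπ0b : ∀ᵐ ω ∂P, |π0 ω| ≤ 1 := by
    have h1 : P[A|m𝒢] ≤ᵐ[P] P[(fun _ => (1 : ℝ))|m𝒢] :=
      condExp_mono bA.integrable (integrable_const 1) hA01'.2
    have h0 : P[(fun _ => (0 : ℝ))|m𝒢] ≤ᵐ[P] P[A|m𝒢] :=
      condExp_mono (integrable_const 0) bA.integrable hA01'.1
    have e1 : P[(fun _ => (1 : ℝ))|m𝒢] = fun _ => (1 : ℝ) := condExp_const hGΩ 1
    have e0 : P[(fun _ => (0 : ℝ))|m𝒢] = fun _ => (0 : ℝ) := condExp_const hGΩ 0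
    rw [e1] at h1; rw [e0] at h0
    filter_upwards [h1, h0, hπ0] with ω hu hl he
    rw [he]; rw [abs_le]; constructor <;> simp_all <;> linarith
  have bπ0 : AEBdd P π0 := ⟨(hπ0meas.mono hGΩ le_rfl).aestronglyMeasurable, 1, hπ0b⟩
  -- zero lemma: ∫ g (A - π0) = 0 for bounded m𝒢-measurable g
  have hzero : ∀ (g : Ω → ℝ), Measurable[m𝒢] g → AEBdd P g →
      ∫ ω, g ω * (A ω - π0 ω) ∂P = 0 := by
    intro g hg bg
    obtain ⟨C, hC⟩ := bg.2
    have h1 : ∫ ω, g ω * A ω ∂P = ∫ ω, g ω * (P[A|m𝒢]) ω ∂P :=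
      integral_mul_eq_integral_mul_condexp P hGΩ (hg.stronglyMeasurable) hC bA.integrable
    have h2 : ∫ ω, g ω * (P[A|m𝒢]) ω ∂P = ∫ ω, g ω * π0 ω ∂P := by
      refine integral_congr_ae ?_
      filter_upwards [hπ0] with ω he
      rw [he]
    have hsplit : ∫ ω, g ω * (A ω - π0 ω) ∂P
        = (∫ ω, g ω * A ω ∂P) - ∫ ω, g ω * π0 ω ∂P := by
      rw [← integral_sub (bg.mul_integrable bA.integrable) ((bg.mul bπ0).integrable)]
      refine integral_congr_ae (Filter.Eventually.of_forall fun ω => ?_)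
      ring
    rw [hsplit, h1, h2, sub_self]
  -- step 1: replace Y by its regression
  have hYint : Integrable Y P := hY.integrable one_le_two
  have bf : AEBdd P (fun ω => γ ω * (A ω - πn ω)) := bγ.mul (bA.sub bπn)
  obtain ⟨Cf, hCf⟩ := bf.2
  have hfSM : StronglyMeasurable[m𝓗] (fun ω => γ ω * (A ω - πn ω)) :=
    (((hγ.mono hGH le_rfl).mul (hA.sub (hπn.mono hGH le_rfl)))).stronglyMeasurable
  have hstep1 : ∫ ω, γ ω * (A ω - πn ω) * Y ω ∂P
      = ∫ ω, γ ω * (A ω - πn ω) * (m0 ω + (A ω - π0 ω) * τ0 ω) ∂P := by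
    rw [integral_mul_eq_integral_mul_condexp P hHΩ hfSM hCf hYint]
    refine integral_congr_ae ?_
    filter_upwards [hreg] with ω he
    rw [he]
  -- integrabilities
  have bμ : AEBdd P (fun ω => mn ω + (A ω - πn ω) * τn ω) :=
    bmn.add ((bA.sub bπn).mul bτn)
  have bfreg : AEBdd P (fun ω => γ ω * (A ω - πn ω) * (m0 ω + (A ω - π0 ω) * τ0 ω)) :=
    bf.mul (bm0.add ((bA.sub bπ0).mul bτ0))
  have bfμ : AEBdd P (fun ω => γ ω * (A ω - πn ω) * (mn ω + (A ω - πn ω) * τn ω)) :=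
    bf.mul bμ
  have bJ1 : AEBdd P (fun ω => γ ω * (π0 ω - πn ω) * (m0 ω - mn ω)) :=
    (bγ.mul (bπ0.sub bπn)).mul (bm0.sub bmn)
  have bJ2 : AEBdd P (fun ω => γ ω * (A ω - π0 ω) ^ 2 * (τ0 ω - t ω)) :=
    (bγ.mul ((bA.sub bπ0).sq)).mul (bτ0.sub bt)
  have bJ3 : AEBdd P (fun ω => γ ω * (A ω - π0 ω) ^ 2 * (τn ω - t ω)) :=
    (bγ.mul ((bA.sub bπ0).sq)).mul (bτn.sub bt)
  have bJ4 : AEBdd P (fun ω => γ ω * (π0 ω - πn ω) ^ 2 * τn ω) :=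
    (bγ.mul ((bπ0.sub bπn).sq)).mul bτn
  have bgd : AEBdd P (fun ω => γ ω * (m0 ω - mn ω) + γ ω * (π0 ω - πn ω) * τ0 ω
      - 2 * γ ω * (π0 ω - πn ω) * τn ω) := by
    have b2 : AEBdd P (fun _ : Ω => (2:ℝ)) :=
      ⟨aestronglyMeasurable_const, 2, Filter.Eventually.of_forall (by simp)⟩
    exact ((bγ.mul (bm0.sub bmn)).add ((bγ.mul (bπ0.sub bπn)).mul bτ0)).sub
      (((b2.mul bγ).mul (bπ0.sub bπn)).mul bτn)
  have bJ5 : AEBdd P (fun ω => (γ ω * (m0 ω - mn ω) + γ ω * (π0 ω - πn ω) * τ0 ω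
      - 2 * γ ω * (π0 ω - πn ω) * τn ω) * (A ω - π0 ω)) :=
    bgd.mul (bA.sub bπ0)
  -- split main integral
  have hI : ∫ ω, γ ω * (A ω - πn ω) * (Y ω - (mn ω + (A ω - πn ω) * τn ω)) ∂P
      = (∫ ω, γ ω * (A ω - πn ω) * Y ω ∂P)
        - ∫ ω, γ ω * (A ω - πn ω) * (mn ω + (A ω - πn ω) * τn ω) ∂P := by
    rw [← integral_sub (bf.mul_integrable hYint) bfμ.integrable]
    refine integral_congr_ae (Filter.Eventually.of_forall fun ω => ?_)
    ring
  -- the key pointwise identity and integral decomposition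
  have hkey : (∫ ω, γ ω * (A ω - πn ω) * (m0 ω + (A ω - π0 ω) * τ0 ω) ∂P)
      - (∫ ω, γ ω * (A ω - πn ω) * (mn ω + (A ω - πn ω) * τn ω) ∂P)
      = (∫ ω, γ ω * (π0 ω - πn ω) * (m0 ω - mn ω) ∂P)
        + (∫ ω, γ ω * (A ω - π0 ω) ^ 2 * (τ0 ω - t ω) ∂P)
        - (∫ ω, γ ω * (A ω - π0 ω) ^ 2 * (τn ω - t ω) ∂P)
        - (∫ ω, γ ω * (π0 ω - πn ω) ^ 2 * τn ω ∂P)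
        + (∫ ω, (γ ω * (m0 ω - mn ω) + γ ω * (π0 ω - πn ω) * τ0 ω
            - 2 * γ ω * (π0 ω - πn ω) * τn ω) * (A ω - π0 ω) ∂P) := by
    rw [← integral_sub bfreg.integrable bfμ.integrable,
        ← integral_add bJ1.integrable bJ2.integrable,
        ← integral_sub (bJ1.add bJ2).integrable bJ3.integrable,
        ← integral_sub ((bJ1.add bJ2).sub bJ3).integrable bJ4.integrable,
        ← integral_add (((bJ1.add bJ2).sub bJ3).sub bJ4).integrable bJ5.integrable]
    refine integral_congr_ae (Filter.Eventually.of_forall fun ω => ?_)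
    ring
  have hJ5 : ∫ ω, (γ ω * (m0 ω - mn ω) + γ ω * (π0 ω - πn ω) * τ0 ω
      - 2 * γ ω * (π0 ω - πn ω) * τn ω) * (A ω - π0 ω) ∂P = 0 := by
    refine hzero _ ?_ bgd
    exact ((hγ.mul (hm0.sub hmn)).add ((hγ.mul (hπ0meas.sub hπn)).mul hτ0)).sub
      (((measurable_const.mul hγ).mul (hπ0meas.sub hπn)).mul hτn)
  have htnint : ∫ ω, (τn ω - t ω) ∂P = (∫ ω, τn ω ∂P) - ∫ ω, t ω ∂P :=
    integral_sub bτn.integrable bt.integrable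
  rw [hI, hstep1]
  rw [hkey] at *
  rw [hi, hJ5, hii, htnint]
  ring


/-- Quasi double robustness of the population remainder of the partially linear ADMLE:
with Robinson decomposition `E[Y|ℋ] = m₀ + (A − π₀)·τ₀`, orthogonality (i) of `t`
(the overlap-weighted projection of `τ₀`) and the Riesz-representer property (ii) of `γ`,
the augmented remainder equals
`E[γ(π₀−πₙ)(m₀−mₙ)] − E[γ(π₀−πₙ)²τₙ]`, where `μₙ := mₙ + (A − πₙ)·τₙ`. -/
theorem stmt_8
    {Ω : Type*} [mΩ : MeasurableSpace Ω] (P : Measure Ω) [IsProbabilityMeasure P]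
    (m𝒢 m𝓗 : MeasurableSpace Ω) (hGH : m𝒢 ≤ m𝓗) (hHΩ : m𝓗 ≤ mΩ)
    (A : Ω → ℝ) (hA : Measurable[m𝓗] A) (hA01 : ∀ᵐ ω ∂P, A ω = 0 ∨ A ω = 1)
    (π0 : Ω → ℝ) (hπ0meas : Measurable[m𝒢] π0) (hπ0 : π0 =ᵐ[P] P[A|m𝒢])
    (Y : Ω → ℝ) (hY : MemLp Y 2 P)
    (m0 mn τ0 τn t γ πn : Ω → ℝ)
    (hm0 : Measurable[m𝒢] m0) (hm0b : ∃ C, ∀ ω, |m0 ω| ≤ C)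
    (hmn : Measurable[m𝒢] mn) (hmnb : ∃ C, ∀ ω, |mn ω| ≤ C)
    (hτ0 : Measurable[m𝒢] τ0) (hτ0b : ∃ C, ∀ ω, |τ0 ω| ≤ C)
    (hτn : Measurable[m𝒢] τn) (hτnb : ∃ C, ∀ ω, |τn ω| ≤ C)
    (ht : Measurable[m𝒢] t) (htb : ∃ C, ∀ ω, |t ω| ≤ C)
    (hγ : Measurable[m𝒢] γ) (hγb : ∃ C, ∀ ω, |γ ω| ≤ C)
    (hπn : Measurable[m𝒢] πn) (hπnb : ∃ C, ∀ ω, |πn ω| ≤ C)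
    (hreg : P[Y|m𝓗] =ᵐ[P] fun ω => m0 ω + (A ω - π0 ω) * τ0 ω)
    (hi : ∫ ω, γ ω * (A ω - π0 ω) ^ 2 * (τ0 ω - t ω) ∂P = 0)
    (hii : ∫ ω, γ ω * (A ω - π0 ω) ^ 2 * (τn ω - t ω) ∂P
            = ∫ ω, (τn ω - t ω) ∂P) :
    (∫ ω, γ ω * (A ω - πn ω) * (Y ω - (mn ω + (A ω - πn ω) * τn ω)) ∂P)
      + (∫ ω, τn ω ∂P) - (∫ ω, t ω ∂P)
    = (∫ ω, γ ω * (π0 ω - πn ω) * (m0 ω - mn ω) ∂P)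
      - ∫ ω, γ ω * (π0 ω - πn ω) ^ 2 * τn ω ∂P :=
  @stmt_8_aux Ω m𝒢 m𝓗 mΩ P ‹_› hGH hHΩ A hA hA01 π0 hπ0meas hπ0 Y hY m0 mn τ0 τn t γ πn
    hm0 hm0b hmn hmnb hτ0 hτ0b hτn hτnb ht htb hγ hγb hπn hπnb hreg hi hii
end

section
/- Let (Ω, ℱ, P) be a probability space with sub-σ-algebras 𝒢 ⊆ ℋ ⊆ ℱ. Let A : Ω → ℝ be ℋ-measurable with A ∈ {0,1} P-almost surely, and let π₀ be a 𝒢-measurable function with π₀ = E[A | 𝒢] P-almost surely. Let τ₀, t, γ₀, γ be bounded 𝒢-measurable functions such that: (i) E[γ₀·(A − π₀)²·τ₀] = E[τ₀], (ii) E[γ₀·(A − π₀)²·t] = E[t], and (iii) E[γ·(A − π₀)²·(t − τ₀)] = 0. Then E[t] − E[τ₀] = E[(γ₀ − γ)·(A − π₀)²·(t − τ₀)], and consequently |E[t] − E[τ₀]| ≤ (E[π₀(1−π₀)(γ₀ − γ)²])^{1/2} · (E[π₀(1−π₀)(t − τ₀)²])^{1/2}. -/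
open MeasureTheory

lemma bound_nonneg' {Ω : Type*} [m : MeasurableSpace Ω] (P : Measure Ω) [IsProbabilityMeasure P]
    (f : Ω → ℝ) (C : ℝ) (h : ∀ ω, |f ω| ≤ C) : 0 ≤ C := by
  have hne : Nonempty Ω := by
    by_contra hne
    rw [not_nonempty_iff] at hne
    have h2 : P Set.univ = 0 := by
      rw [Set.univ_eq_empty_iff.mpr hne]
      exact measure_empty
    simp [measure_univ] at h2
  exact (abs_nonneg _).trans (h (Classical.arbitrary Ω))

lemma pi_bounds' {Ω : Type*} [mΩ : MeasurableSpace Ω] (P : Measure Ω) [IsProbabilityMeasure P]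
    (m𝒢 : MeasurableSpace Ω) (hGΩ : m𝒢 ≤ mΩ)
    (A : Ω → ℝ) (hAm : Measurable[mΩ] A) (hA01 : ∀ᵐ ω ∂P, A ω = 0 ∨ A ω = 1)
    (π0 : Ω → ℝ) (hπ0 : π0 =ᵐ[P] P[A|m𝒢]) :
    ∀ᵐ ω ∂P, 0 ≤ π0 ω ∧ π0 ω ≤ 1 := by
  have hAb : ∀ᵐ ω ∂P, |A ω| ≤ 1 := by
    filter_upwards [hA01] with ω hω
    rcases hω with h' | h' <;> simp [h']
  have hAint : Integrable A P :=
    Integrable.mono' (integrable_const 1) hAm.aestronglyMeasurable (by simpa using hAb)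
  have h0 : 0 ≤ᵐ[P] P[A|m𝒢] := condExp_nonneg <| by
    filter_upwards [hA01] with ω hω
    rcases hω with h' | h' <;> simp [h']
  have h1 : P[A|m𝒢] ≤ᵐ[P] P[(fun _ => (1 : ℝ))|m𝒢] :=
    condExp_mono hAint (integrable_const 1) <| by
      filter_upwards [hA01] with ω hω
      rcases hω with h' | h' <;> simp [h']
  rw [condExp_const hGΩ (1 : ℝ)] at h1
  filter_upwards [h0, h1, hπ0] with ω h0' h1' he
  rw [he]; exact ⟨h0', h1'⟩

lemma cs_aux {Ω : Type*} [m : MeasurableSpace Ω] (P : Measure Ω)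
    (f g : Ω → ℝ) (hf2 : Integrable (fun ω => f ω ^ 2) P)
    (hg2 : Integrable (fun ω => g ω ^ 2) P)
    (hfg : Integrable (fun ω => f ω * g ω) P) :
    |∫ ω, f ω * g ω ∂P| ≤ Real.sqrt (∫ ω, f ω ^ 2 ∂P) * Real.sqrt (∫ ω, g ω ^ 2 ∂P) := by
  set a := ∫ ω, g ω ^ 2 ∂P with ha
  set I := ∫ ω, f ω * g ω ∂P with hI
  set c := ∫ ω, f ω ^ 2 ∂P with hc
  have ha0 : 0 ≤ a := integral_nonneg fun ω => sq_nonneg _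
  have hc0 : 0 ≤ c := integral_nonneg fun ω => sq_nonneg _
  have hquad : ∀ x : ℝ, 0 ≤ a * (x * x) + (2 * I) * x + c := by
    intro x
    have e1 : Integrable (fun ω => 2 * x * (f ω * g ω) + x * x * g ω ^ 2) P :=
      (hfg.const_mul _).add (hg2.const_mul _)
    have h1 : ∫ ω, (f ω + x * g ω) ^ 2 ∂P
        = ∫ ω, f ω ^ 2 + (2 * x * (f ω * g ω) + x * x * g ω ^ 2) ∂P := by
      congr 1; funext ω; ring
    have h2 : a * (x * x) + (2 * I) * x + c = ∫ ω, (f ω + x * g ω) ^ 2 ∂P := by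
      rw [h1, integral_add hf2 e1, integral_add (hfg.const_mul (2 * x)) (hg2.const_mul (x * x)),
        integral_const_mul, integral_const_mul]
      ring
    rw [h2]
    exact integral_nonneg fun ω => sq_nonneg _
  have hd := discrim_le_zero hquad
  rw [discrim] at hd
  have hsq : I ^ 2 ≤ c * a := by nlinarith [hd]
  calc |I| = Real.sqrt (I ^ 2) := (Real.sqrt_sq_eq_abs _).symm
    _ ≤ Real.sqrt (c * a) := Real.sqrt_le_sqrt hsq
    _ = Real.sqrt c * Real.sqrt a := Real.sqrt_mul hc0 _
open MeasureTheory

lemma int_bdd {Ω : Type*} [m : MeasurableSpace Ω] (P : Measure Ω) [IsFiniteMeasure P]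
    {f : Ω → ℝ} (hf : AEStronglyMeasurable f P) {C : ℝ} (h : ∀ᵐ ω ∂P, |f ω| ≤ C) :
    Integrable f P :=
  Integrable.mono' (integrable_const C) hf (by simpa using h)

lemma tower_aux {Ω : Type*} [mΩ : MeasurableSpace Ω] (P : Measure Ω) [IsProbabilityMeasure P]
    (m𝒢 : MeasurableSpace Ω) (hGΩ : m𝒢 ≤ mΩ)
    (A : Ω → ℝ) (hAm : Measurable[mΩ] A) (hA01 : ∀ᵐ ω ∂P, A ω = 0 ∨ A ω = 1)
    (π0 : Ω → ℝ) (hπ0meas : Measurable[m𝒢] π0) (hπ0 : π0 =ᵐ[P] P[A|m𝒢])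
    (h : Ω → ℝ) (hh : Measurable[m𝒢] h) (C : ℝ) (hhb : ∀ ω, |h ω| ≤ C) :
    ∫ ω, h ω * (A ω - π0 ω) ^ 2 ∂P = ∫ ω, π0 ω * (1 - π0 ω) * h ω ∂P := by
  have hπm : Measurable[mΩ] π0 := hπ0meas.mono hGΩ le_rfl
  have hhm : Measurable[mΩ] h := hh.mono hGΩ le_rfl
  have hAb : ∀ᵐ ω ∂P, |A ω| ≤ 1 := by
    filter_upwards [hA01] with ω hω
    rcases hω with h' | h' <;> simp [h']
  have hAint : Integrable A P :=
    int_bdd (m := mΩ) P (hAm.aestronglyMeasurable) hAb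
  have hπb : ∀ᵐ ω ∂P, 0 ≤ π0 ω ∧ π0 ω ≤ 1 := by
    have h0 : 0 ≤ᵐ[P] P[A|m𝒢] := condExp_nonneg <| by
      filter_upwards [hA01] with ω hω
      rcases hω with h' | h' <;> simp [h']
    have h1 : P[A|m𝒢] ≤ᵐ[P] P[(fun _ => (1 : ℝ))|m𝒢] :=
      condExp_mono hAint (integrable_const 1) <| by
        filter_upwards [hA01] with ω hω
        rcases hω with h' | h' <;> simp [h']
    rw [condExp_const hGΩ (1 : ℝ)] at h1
    filter_upwards [h0, h1, hπ0] with ω h0' h1' he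
    rw [he]; exact ⟨h0', h1'⟩
  have hCnn : 0 ≤ C := by
    have hne : Nonempty Ω := by
      by_contra hne
      rw [not_nonempty_iff] at hne
      have h2 : P Set.univ = 0 := by
        rw [Set.univ_eq_empty_iff.mpr hne]
        exact measure_empty
      simp [measure_univ] at h2
    exact (abs_nonneg _).trans (hhb (Classical.arbitrary Ω))
  set g : Ω → ℝ := fun ω => h ω * (1 - 2 * π0 ω) with hg
  have hgm : Measurable[mΩ] g := hhm.mul (measurable_const.sub (hπm.const_mul 2))
  have hgb : ∀ᵐ ω ∂P, |g ω| ≤ C := by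
    filter_upwards [hπb] with ω hp
    obtain ⟨hp0, hp1⟩ := hp
    have h2 : |1 - 2 * π0 ω| ≤ 1 := by rw [abs_le]; constructor <;> linarith
    calc |g ω| = |h ω| * |1 - 2 * π0 ω| := abs_mul _ _
      _ ≤ C * 1 := mul_le_mul (hhb ω) h2 (abs_nonneg _) hCnn
      _ = C := mul_one C
  have hgA_int : Integrable (fun ω => g ω * A ω) P := by
    refine int_bdd (m := mΩ) P (hgm.mul hAm).aestronglyMeasurable (C := C) ?_
    filter_upwards [hgb, hAb] with ω hgω hAω
    calc |g ω * A ω| = |g ω| * |A ω| := abs_mul _ _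
      _ ≤ C * 1 := mul_le_mul hgω hAω (abs_nonneg _) hCnn
      _ = C := mul_one C
  have hgπ_int : Integrable (fun ω => g ω * π0 ω) P := by
    refine int_bdd (m := mΩ) P (hgm.mul hπm).aestronglyMeasurable (C := C) ?_
    filter_upwards [hgb, hπb] with ω hgω hp
    obtain ⟨hp0, hp1⟩ := hp
    calc |g ω * π0 ω| = |g ω| * |π0 ω| := abs_mul _ _
      _ ≤ C * 1 := mul_le_mul hgω (abs_le.mpr ⟨by linarith, hp1⟩) (abs_nonneg _) hCnn
      _ = C := mul_one C
  have hπsq_int : Integrable (fun ω => h ω * π0 ω ^ 2) P := by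
    refine int_bdd (m := mΩ) P (hhm.mul (hπm.pow_const 2)).aestronglyMeasurable (C := C) ?_
    filter_upwards [hπb] with ω hp
    obtain ⟨hp0, hp1⟩ := hp
    have h2 : |π0 ω ^ 2| ≤ 1 := by rw [abs_le]; constructor <;> nlinarith
    calc |h ω * π0 ω ^ 2| = |h ω| * |π0 ω ^ 2| := abs_mul _ _
      _ ≤ C * 1 := mul_le_mul (hhb ω) h2 (abs_nonneg _) hCnn
      _ = C := mul_one C
  have hpull : P[g * A|m𝒢] =ᵐ[P] g * P[A|m𝒢] :=
    condExp_mul_of_stronglyMeasurable_left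
      ((hh.mul (((measurable_const.sub (hπ0meas.const_mul 2)) : Measurable[m𝒢] fun ω => 1 - 2 * π0 ω))).stronglyMeasurable)
      hgA_int hAint
  have hgA : ∫ ω, g ω * A ω ∂P = ∫ ω, g ω * π0 ω ∂P := by
    calc ∫ ω, g ω * A ω ∂P = ∫ ω, (P[g * A|m𝒢]) ω ∂P := (integral_condExp hGΩ).symm
      _ = ∫ ω, g ω * (P[A|m𝒢]) ω ∂P := integral_congr_ae hpull
      _ = ∫ ω, g ω * π0 ω ∂P := by
          refine integral_congr_ae ?_
          filter_upwards [hπ0] with ω he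
          rw [he]
  calc ∫ ω, h ω * (A ω - π0 ω) ^ 2 ∂P
      = ∫ ω, g ω * A ω + h ω * π0 ω ^ 2 ∂P := by
        refine integral_congr_ae ?_
        filter_upwards [hA01] with ω hω
        rcases hω with h' | h' <;> simp only [hg] <;> rw [h'] <;> ring
    _ = (∫ ω, g ω * A ω ∂P) + ∫ ω, h ω * π0 ω ^ 2 ∂P := integral_add hgA_int hπsq_int
    _ = (∫ ω, g ω * π0 ω ∂P) + ∫ ω, h ω * π0 ω ^ 2 ∂P := by rw [hgA]
    _ = ∫ ω, g ω * π0 ω + h ω * π0 ω ^ 2 ∂P := (integral_add hgπ_int hπsq_int).symm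
    _ = ∫ ω, π0 ω * (1 - π0 ω) * h ω ∂P := by
        refine integral_congr_ae (Filter.Eventually.of_forall fun ω => ?_)
        simp only [hg]; ring

lemma int_prod' {Ω : Type*} [mΩ : MeasurableSpace Ω] (P : Measure Ω) [IsProbabilityMeasure P]
    (m𝒢 : MeasurableSpace Ω) (hGΩ : m𝒢 ≤ mΩ)
    (A : Ω → ℝ) (hAm : Measurable[mΩ] A) (hA01 : ∀ᵐ ω ∂P, A ω = 0 ∨ A ω = 1)
    (π0 : Ω → ℝ) (hπ0meas : Measurable[m𝒢] π0) (hπ0 : π0 =ᵐ[P] P[A|m𝒢])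
    (f g : Ω → ℝ) (hf : Measurable[m𝒢] f) (Cf : ℝ) (hCf : ∀ ω, |f ω| ≤ Cf)
    (hg : Measurable[m𝒢] g) (Cg : ℝ) (hCg : ∀ ω, |g ω| ≤ Cg) :
    Integrable (fun ω => f ω * (A ω - π0 ω) ^ 2 * g ω) P := by
  have hπm : Measurable[mΩ] π0 := hπ0meas.mono hGΩ le_rfl
  have hfm : Measurable[mΩ] f := hf.mono hGΩ le_rfl
  have hgm : Measurable[mΩ] g := hg.mono hGΩ le_rfl
  have hCfnn : 0 ≤ Cf := bound_nonneg' (m := mΩ) P f Cf hCf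
  have hCgnn : 0 ≤ Cg := bound_nonneg' (m := mΩ) P g Cg hCg
  have hmeas : AEStronglyMeasurable[mΩ] (fun ω => f ω * (A ω - π0 ω) ^ 2 * g ω) P :=
    ((hfm.mul ((hAm.sub hπm).pow_const 2)).mul hgm).aestronglyMeasurable
  refine int_bdd (m := mΩ) P hmeas (C := Cf * 4 * Cg) ?_
  have hπb := pi_bounds' (mΩ := mΩ) P m𝒢 hGΩ A hAm hA01 π0 hπ0
  filter_upwards [hA01, hπb] with ω hω hp
  obtain ⟨hp0, hp1⟩ := hp
  have hs : (A ω - π0 ω) ^ 2 ≤ 4 := by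
    rcases hω with h' | h' <;> rw [h'] <;> nlinarith
  have h1 : |f ω| * (A ω - π0 ω) ^ 2 ≤ Cf * 4 :=
    mul_le_mul (hCf ω) hs (sq_nonneg _) hCfnn
  have h2 : |f ω| * (A ω - π0 ω) ^ 2 * |g ω| ≤ Cf * 4 * Cg :=
    mul_le_mul h1 (hCg ω) (abs_nonneg _) (by positivity)
  calc |f ω * (A ω - π0 ω) ^ 2 * g ω|
      = |f ω| * (A ω - π0 ω) ^ 2 * |g ω| := by
        rw [abs_mul, abs_mul, abs_of_nonneg (sq_nonneg (A ω - π0 ω))]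
    _ ≤ Cf * 4 * Cg := h2
open MeasureTheory


/-- Second-order oracle bias for the partially linear ADMLE of the ATE: under the
representer identities (i)–(ii) for `γ₀` and the orthogonality (iii) of the
overlap-weighted projection `t` of `τ₀`, one has
`E[t] − E[τ₀] = E[(γ₀ − γ)(A − π₀)²(t − τ₀)]`, hence the Cauchy–Schwarz bound
`|E[t] − E[τ₀]| ≤ ‖γ₀ − γ‖_{w₀} · ‖t − τ₀‖_{w₀}` with overlap weight `π₀(1−π₀)`. -/
theorem stmt_9
    {Ω : Type*} [mΩ : MeasurableSpace Ω] (P : Measure Ω) [IsProbabilityMeasure P]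
    (m𝒢 m𝓗 : MeasurableSpace Ω) (hGH : m𝒢 ≤ m𝓗) (hHΩ : m𝓗 ≤ mΩ)
    (A : Ω → ℝ) (hA : Measurable[m𝓗] A) (hA01 : ∀ᵐ ω ∂P, A ω = 0 ∨ A ω = 1)
    (π0 : Ω → ℝ) (hπ0meas : Measurable[m𝒢] π0) (hπ0 : π0 =ᵐ[P] P[A|m𝒢])
    (τ0 t γ0 γ : Ω → ℝ)
    (hτ0 : Measurable[m𝒢] τ0) (hτ0b : ∃ C, ∀ ω, |τ0 ω| ≤ C)
    (ht : Measurable[m𝒢] t) (htb : ∃ C, ∀ ω, |t ω| ≤ C)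
    (hγ0 : Measurable[m𝒢] γ0) (hγ0b : ∃ C, ∀ ω, |γ0 ω| ≤ C)
    (hγ : Measurable[m𝒢] γ) (hγb : ∃ C, ∀ ω, |γ ω| ≤ C)
    (hi : ∫ ω, γ0 ω * (A ω - π0 ω) ^ 2 * τ0 ω ∂P = ∫ ω, τ0 ω ∂P)
    (hii : ∫ ω, γ0 ω * (A ω - π0 ω) ^ 2 * t ω ∂P = ∫ ω, t ω ∂P)
    (hiii : ∫ ω, γ ω * (A ω - π0 ω) ^ 2 * (t ω - τ0 ω) ∂P = 0) :
    ((∫ ω, t ω ∂P) - (∫ ω, τ0 ω ∂P)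
      = ∫ ω, (γ0 ω - γ ω) * (A ω - π0 ω) ^ 2 * (t ω - τ0 ω) ∂P) ∧
    |(∫ ω, t ω ∂P) - (∫ ω, τ0 ω ∂P)|
      ≤ Real.sqrt (∫ ω, π0 ω * (1 - π0 ω) * (γ0 ω - γ ω) ^ 2 ∂P)
        * Real.sqrt (∫ ω, π0 ω * (1 - π0 ω) * (t ω - τ0 ω) ^ 2 ∂P) := by
  obtain ⟨Cτ, hCτ⟩ := hτ0b
  obtain ⟨Ct, hCt⟩ := htb
  obtain ⟨Cγ0, hCγ0⟩ := hγ0b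
  obtain ⟨Cγ, hCγ⟩ := hγb
  have hGΩ : m𝒢 ≤ mΩ := hGH.trans hHΩ
  have hAm : Measurable[mΩ] A := hA.mono hHΩ le_rfl
  have hd_meas : Measurable[m𝒢] fun ω => t ω - τ0 ω := ht.sub hτ0
  have hd_bdd : ∀ ω, |t ω - τ0 ω| ≤ Ct + Cτ := fun ω =>
    (abs_sub (t ω) (τ0 ω)).trans (add_le_add (hCt ω) (hCτ ω))
  have hdγ_meas : Measurable[m𝒢] fun ω => γ0 ω - γ ω := hγ0.sub hγ
  have hdγ_bdd : ∀ ω, |γ0 ω - γ ω| ≤ Cγ0 + Cγ := fun ω =>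
    (abs_sub (γ0 ω) (γ ω)).trans (add_le_add (hCγ0 ω) (hCγ ω))
  have I_t : Integrable (fun ω => γ0 ω * (A ω - π0 ω) ^ 2 * t ω) P :=
    int_prod' (mΩ := mΩ) P m𝒢 hGΩ A hAm hA01 π0 hπ0meas hπ0 γ0 t hγ0 Cγ0 hCγ0 ht Ct hCt
  have I_τ : Integrable (fun ω => γ0 ω * (A ω - π0 ω) ^ 2 * τ0 ω) P :=
    int_prod' (mΩ := mΩ) P m𝒢 hGΩ A hAm hA01 π0 hπ0meas hπ0 γ0 τ0 hγ0 Cγ0 hCγ0 hτ0 Cτ hCτ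
  have I0_d : Integrable (fun ω => γ0 ω * (A ω - π0 ω) ^ 2 * (t ω - τ0 ω)) P :=
    int_prod' (mΩ := mΩ) P m𝒢 hGΩ A hAm hA01 π0 hπ0meas hπ0 γ0 _ hγ0 Cγ0 hCγ0
      hd_meas (Ct + Cτ) hd_bdd
  have Iγ_d : Integrable (fun ω => γ ω * (A ω - π0 ω) ^ 2 * (t ω - τ0 ω)) P :=
    int_prod' (mΩ := mΩ) P m𝒢 hGΩ A hAm hA01 π0 hπ0meas hπ0 γ _ hγ Cγ hCγ
      hd_meas (Ct + Cτ) hd_bdd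
  have eqA : ∫ ω, γ0 ω * (A ω - π0 ω) ^ 2 * (t ω - τ0 ω) ∂P
      = (∫ ω, t ω ∂P) - ∫ ω, τ0 ω ∂P := by
    calc ∫ ω, γ0 ω * (A ω - π0 ω) ^ 2 * (t ω - τ0 ω) ∂P
        = ∫ ω, γ0 ω * (A ω - π0 ω) ^ 2 * t ω - γ0 ω * (A ω - π0 ω) ^ 2 * τ0 ω ∂P := by
          refine integral_congr_ae (Filter.Eventually.of_forall fun ω => ?_); ring
      _ = (∫ ω, γ0 ω * (A ω - π0 ω) ^ 2 * t ω ∂P)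
          - ∫ ω, γ0 ω * (A ω - π0 ω) ^ 2 * τ0 ω ∂P := integral_sub I_t I_τ
      _ = (∫ ω, t ω ∂P) - ∫ ω, τ0 ω ∂P := by rw [hi, hii]
  have part1 : (∫ ω, t ω ∂P) - (∫ ω, τ0 ω ∂P)
      = ∫ ω, (γ0 ω - γ ω) * (A ω - π0 ω) ^ 2 * (t ω - τ0 ω) ∂P := by
    calc (∫ ω, t ω ∂P) - (∫ ω, τ0 ω ∂P)
        = (∫ ω, γ0 ω * (A ω - π0 ω) ^ 2 * (t ω - τ0 ω) ∂P)
          - ∫ ω, γ ω * (A ω - π0 ω) ^ 2 * (t ω - τ0 ω) ∂P := by rw [eqA, hiii]; ring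
      _ = ∫ ω, γ0 ω * (A ω - π0 ω) ^ 2 * (t ω - τ0 ω)
            - γ ω * (A ω - π0 ω) ^ 2 * (t ω - τ0 ω) ∂P := (integral_sub I0_d Iγ_d).symm
      _ = ∫ ω, (γ0 ω - γ ω) * (A ω - π0 ω) ^ 2 * (t ω - τ0 ω) ∂P := by
          refine integral_congr_ae (Filter.Eventually.of_forall fun ω => ?_); ring
  refine ⟨part1, ?_⟩
  set f : Ω → ℝ := fun ω => (γ0 ω - γ ω) * (A ω - π0 ω) with hf
  set g : Ω → ℝ := fun ω => (t ω - τ0 ω) * (A ω - π0 ω) with hg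
  have hf2 : Integrable (fun ω => f ω ^ 2) P := by
    refine (int_prod' (mΩ := mΩ) P m𝒢 hGΩ A hAm hA01 π0 hπ0meas hπ0 _ _ hdγ_meas (Cγ0 + Cγ)
      hdγ_bdd hdγ_meas (Cγ0 + Cγ) hdγ_bdd).congr (Filter.Eventually.of_forall fun ω => ?_)
    simp only [hf]; ring
  have hg2 : Integrable (fun ω => g ω ^ 2) P := by
    refine (int_prod' (mΩ := mΩ) P m𝒢 hGΩ A hAm hA01 π0 hπ0meas hπ0 _ _ hd_meas (Ct + Cτ)
      hd_bdd hd_meas (Ct + Cτ) hd_bdd).congr (Filter.Eventually.of_forall fun ω => ?_)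
    simp only [hg]; ring
  have hfg : Integrable (fun ω => f ω * g ω) P := by
    refine (int_prod' (mΩ := mΩ) P m𝒢 hGΩ A hAm hA01 π0 hπ0meas hπ0 _ _ hdγ_meas (Cγ0 + Cγ)
      hdγ_bdd hd_meas (Ct + Cτ) hd_bdd).congr (Filter.Eventually.of_forall fun ω => ?_)
    simp only [hf, hg]; ring
  have hcs := cs_aux (m := mΩ) P f g hf2 hg2 hfg
  have e_fg : ∫ ω, f ω * g ω ∂P
      = ∫ ω, (γ0 ω - γ ω) * (A ω - π0 ω) ^ 2 * (t ω - τ0 ω) ∂P := by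
    refine integral_congr_ae (Filter.Eventually.of_forall fun ω => ?_)
    simp only [hf, hg]; ring
  have e_f2 : ∫ ω, f ω ^ 2 ∂P = ∫ ω, π0 ω * (1 - π0 ω) * (γ0 ω - γ ω) ^ 2 ∂P := by
    calc ∫ ω, f ω ^ 2 ∂P = ∫ ω, (γ0 ω - γ ω) ^ 2 * (A ω - π0 ω) ^ 2 ∂P := by
          refine integral_congr_ae (Filter.Eventually.of_forall fun ω => ?_)
          simp only [hf]; ring
      _ = ∫ ω, π0 ω * (1 - π0 ω) * (γ0 ω - γ ω) ^ 2 ∂P := by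
          refine tower_aux (mΩ := mΩ) P m𝒢 hGΩ A hAm hA01 π0 hπ0meas hπ0
            (fun ω => (γ0 ω - γ ω) ^ 2) ((hγ0.sub hγ).pow_const 2) ((Cγ0 + Cγ) ^ 2)
            (fun ω => ?_)
          rw [abs_of_nonneg (sq_nonneg _)]
          have h1 := abs_le.mp (hdγ_bdd ω)
          show (γ0 ω - γ ω) ^ 2 ≤ (Cγ0 + Cγ) ^ 2
          nlinarith [h1.1, h1.2]
  have e_g2 : ∫ ω, g ω ^ 2 ∂P = ∫ ω, π0 ω * (1 - π0 ω) * (t ω - τ0 ω) ^ 2 ∂P := by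
    calc ∫ ω, g ω ^ 2 ∂P = ∫ ω, (t ω - τ0 ω) ^ 2 * (A ω - π0 ω) ^ 2 ∂P := by
          refine integral_congr_ae (Filter.Eventually.of_forall fun ω => ?_)
          simp only [hg]; ring
      _ = ∫ ω, π0 ω * (1 - π0 ω) * (t ω - τ0 ω) ^ 2 ∂P := by
          refine tower_aux (mΩ := mΩ) P m𝒢 hGΩ A hAm hA01 π0 hπ0meas hπ0
            (fun ω => (t ω - τ0 ω) ^ 2) ((ht.sub hτ0).pow_const 2) ((Ct + Cτ) ^ 2)
            (fun ω => ?_)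
          rw [abs_of_nonneg (sq_nonneg _)]
          have h1 := abs_le.mp (hd_bdd ω)
          show (t ω - τ0 ω) ^ 2 ≤ (Ct + Cτ) ^ 2
          nlinarith [h1.1, h1.2]
  rw [part1, ← e_fg, ← e_f2, ← e_g2]
  exact hcs
end
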